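/- For all integers n and k with 1 ≤ k ≤ n, the number of pairs (π, ℓ), where π ∈ P_{n,k} is a set partition of [n] with exactly k blocks in canonical sequential form and ℓ is a position of a symmetric peak of π (π_ℓ < π_{ℓ+1} > π_{ℓ+2} and π_ℓ = π_{ℓ+2}) such that π_{ℓ+1} is a record of π (π_{ℓ+1} > π_j for all j < ℓ+1), equals (k−1)·S(n−1,k), where S(n−1,k) is the Stirling number of the second kind. -/

import Mathlib

/-!
Deleting the letter `π (ℓ+2) = π ℓ` of a symmetric peak at `ℓ` with record top keeps the
canonical form (the deleted letter already occurs at `ℓ`), giving `σ ∈ P_{n-1,k}` and the peak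
value `v = π (ℓ+1) ∈ {2,…,k}`. Since `v` is a record, `ℓ+1` is the first occurrence of `v` in
`σ`, so `(π, ℓ)` is recovered from `(σ, v)` by inserting a copy of `σ ℓ` right after that first
occurrence, and every pair `(σ, v)` arises. Hence the count is `(k-1)·|P_{n-1,k}|`, and
`|P_{n-1,k}| = S(n-1,k)` because numbering the blocks of a set partition by their least elements
is a bijection onto canonical words.
-/

open scoped BigOperators

/-- The set of canonical sequential forms (restricted growth functions) of
set partitions of `[n] = {1,…,n}` with exactly `k` blocks: words
`π : Fin n → ℕ` with letters in `{1,…,k}` satisfying `π 0 = 1`,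
`π i ≤ 1 + max (π 0, …, π (i-1))` for `i ≠ 0`, and `max π = k`. -/
def SetPartitionWords (n k : ℕ) : Set (Fin n → ℕ) :=
  {π | (∀ i, 1 ≤ π i) ∧
       (∀ i : Fin n, (i : ℕ) = 0 → π i = 1) ∧
       (∀ i : Fin n, (i : ℕ) ≠ 0 →
          π i ≤ 1 + (Finset.univ.filter (fun j : Fin n => j < i)).sup π) ∧
       Finset.univ.sup π = k}

/-- Words of length `n` over the alphabet `[j] = {1,…,j}`. -/
def Words (n j : ℕ) : Set (Fin n → ℕ) :=
  {w | ∀ i, 1 ≤ w i ∧ w i ≤ j}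

/-- The number of symmetric peaks of a word: positions `ℓ` with
`π ℓ < π (ℓ+1) > π (ℓ+2)` and `π ℓ = π (ℓ+2)`. -/
noncomputable def sympeak {n : ℕ} (π : Fin n → ℕ) : ℕ :=
  Set.ncard {ℓ : Fin n | ∃ h : (ℓ : ℕ) + 2 < n,
    π ℓ < π ⟨(ℓ : ℕ) + 1, by omega⟩ ∧
    π ⟨(ℓ : ℕ) + 2, h⟩ < π ⟨(ℓ : ℕ) + 1, by omega⟩ ∧
    π ℓ = π ⟨(ℓ : ℕ) + 2, h⟩}

/-- The number of non-symmetric peaks of a word: positions `ℓ` with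
`π ℓ < π (ℓ+1) > π (ℓ+2)` and `π ℓ ≠ π (ℓ+2)`. -/
noncomputable def nonsympeak {n : ℕ} (π : Fin n → ℕ) : ℕ :=
  Set.ncard {ℓ : Fin n | ∃ h : (ℓ : ℕ) + 2 < n,
    π ℓ < π ⟨(ℓ : ℕ) + 1, by omega⟩ ∧
    π ⟨(ℓ : ℕ) + 2, h⟩ < π ⟨(ℓ : ℕ) + 1, by omega⟩ ∧
    π ℓ ≠ π ⟨(ℓ : ℕ) + 2, h⟩}

/-- The Stirling number of the second kind `S(n,k)`: the number of set
partitions of an `n`-element set into exactly `k` nonempty blocks. -/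
noncomputable def stirlingS2 (n k : ℕ) : ℕ :=
  Nat.card {P : Finpartition (Finset.univ : Finset (Fin n)) // P.parts.card = k}

open Finset

def IsRestrictedGrowth {n : ℕ} (π : Fin n → ℕ) : Prop :=
  ∀ i, 0 < π i ∧ ∀ v, 0 < v → v < π i → ∃ j < i, π j = v

namespace IsRestrictedGrowth

variable {n : ℕ} {π : Fin n → ℕ}

theorem exists_eq (hπ : IsRestrictedGrowth π) {v : ℕ} (hv : 0 < v) (hvπ : v ≤ univ.sup π) :
    ∃ i, π i = v := by
  have hne : (univ : Finset (Fin n)).Nonempty :=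
    nonempty_of_ne_empty fun h => by simp [h] at hvπ; omega
  obtain ⟨i, -, hi⟩ := exists_mem_eq_sup univ hne π
  rcases (hi ▸ hvπ).eq_or_lt with h | h
  · exact ⟨i, h.symm⟩
  · obtain ⟨j, -, hj⟩ := (hπ i).2 v hv h
    exact ⟨j, hj⟩

theorem lt_of_forall_ne (hπ : IsRestrictedGrowth π) {p : Fin n} (hp : ∀ j < p, π j ≠ π p) :
    ∀ j < p, π j < π p := by
  intro j hjp
  refine lt_of_le_of_ne (not_lt.1 fun hlt => ?_) (hp j hjp)
  obtain ⟨j', hj'j, hj'⟩ := (hπ j).2 (π p) (hπ p).1 hlt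
  exact hp j' (hj'j.trans hjp) hj'

theorem eq_of_forall_eq_iff {π' : Fin n → ℕ} (hπ : IsRestrictedGrowth π)
    (hπ' : IsRestrictedGrowth π') (hker : ∀ i j, π i = π j ↔ π' i = π' j) : π = π' := by
  funext i
  induction i using WellFoundedLT.induction with
  | ind i ih =>
    by_cases hnew : ∃ j < i, π j = π i
    · obtain ⟨j, hji, hj⟩ := hnew
      rw [← hj, ih j hji, (hker j i).1 hj]
    · -- `i` opens a new block in both words, and the smaller of the two letters at `i`
      -- would already occur before `i` in the other word
      push Not at hnew
      by_contra hne
      rcases Nat.lt_or_gt_of_ne hne with h | h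
      · obtain ⟨j, hji, hj⟩ := (hπ' i).2 (π i) (hπ i).1 h
        exact hnew j hji (by rw [ih j hji, hj])
      · obtain ⟨j, hji, hj⟩ := (hπ i).2 (π' i) (hπ' i).1 h
        exact hnew j hji ((hker j i).2 (by rw [← ih j hji, hj]))

end IsRestrictedGrowth

theorem mem_setPartitionWords_iff {n k : ℕ} {π : Fin n → ℕ} :
    π ∈ SetPartitionWords n k ↔ IsRestrictedGrowth π ∧ univ.sup π = k := by
  constructor
  · rintro ⟨hpos, hzero, hgrowth, hsup⟩
    refine ⟨fun i => ⟨hpos i, ?_⟩, hsup⟩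
    induction i using WellFoundedLT.induction with
    | ind i ih =>
      intro v hv hvi
      have hi : (i : ℕ) ≠ 0 := fun h => by have := hzero i h; omega
      obtain ⟨j, hj, hvj⟩ := (Finset.le_sup_iff hv).1
        (show v ≤ (univ.filter fun j => j < i).sup π by have := hgrowth i hi; omega)
      rw [mem_filter] at hj
      rcases hvj.eq_or_lt with h | h
      · exact ⟨j, hj.2, h.symm⟩
      · obtain ⟨j', hj'j, hj'⟩ := ih j hj.2 v hv h
        exact ⟨j', hj'j.trans hj.2, hj'⟩
  · rintro ⟨hπ, hsup⟩
    refine ⟨fun i => (hπ i).1, fun i hi => ?_, fun i _ => ?_, hsup⟩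
    · by_contra h
      obtain ⟨j, hj, -⟩ := (hπ i).2 1 one_pos (by have := (hπ i).1; omega)
      exact absurd (Fin.lt_def.1 hj) (by omega)
    · by_cases h : π i ≤ 1
      · omega
      · obtain ⟨j, hj, hjv⟩ := (hπ i).2 (π i - 1) (by omega) (by omega)
        have := le_sup (f := π) (s := univ.filter fun j => j < i) (by simpa using hj)
        omega

namespace Finpartition

variable {α : Type*} [DecidableEq α] {s : Finset α}

theorem eq_of_forall_part_eq_part_iff {P Q : Finpartition s}
    (h : ∀ a ∈ s, ∀ b ∈ s, P.part a = P.part b ↔ Q.part a = Q.part b) : P = Q := by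
  have hpart : ∀ a ∈ s, P.part a = Q.part a := fun a ha => by
    ext b
    by_cases hb : b ∈ s
    · rw [P.mem_part_iff_part_eq_part hb ha, Q.mem_part_iff_part_eq_part hb ha, h b hb a ha]
    · exact iff_of_false (fun h' => hb (P.part_subset a h')) (fun h' => hb (Q.part_subset a h'))
  suffices ∀ {P Q : Finpartition s}, (∀ a ∈ s, P.part a = Q.part a) → P.parts ⊆ Q.parts from
    Finpartition.ext ((this hpart).antisymm (this fun a ha => (hpart a ha).symm))
  intro P Q hPQ b hb
  obtain ⟨a, ha⟩ := P.nonempty_of_mem_parts hb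
  have has : a ∈ s := P.le hb ha
  rw [← P.part_eq_of_mem hb ha, hPQ a has]
  exact Q.part_mem.2 has

theorem part_ofSetoid_eq_part_ofSetoid_iff [Fintype α] {r : Setoid α} [DecidableRel r.r]
    {a b : α} : (ofSetoid r).part a = (ofSetoid r).part b ↔ r a b := by
  rw [eq_comm, ← (ofSetoid r).mem_part_iff_part_eq_part (mem_univ b) (mem_univ a),
    mem_part_ofSetoid_iff_rel]

variable [LinearOrder α] (P : Finpartition s)

theorem injOn_min_parts : Set.InjOn Finset.min (P.parts : Set (Finset α)) := by
  intro b hb c hc hbc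
  obtain ⟨x, hx⟩ := Finset.min_of_nonempty (P.nonempty_of_mem_parts hb)
  exact P.eq_of_mem_parts hb hc (mem_of_min hx) (mem_of_min (hbc ▸ hx))

def blockIndex (b : Finset α) : ℕ := #{c ∈ P.parts | c.min ≤ b.min}

variable {P}

theorem blockIndex_le_blockIndex_iff {b c : Finset α} (hb : b ∈ P.parts) :
    P.blockIndex b ≤ P.blockIndex c ↔ b.min ≤ c.min := by
  refine ⟨fun h => not_lt.1 fun hcb => h.not_gt ?_, fun h => ?_⟩
  · refine card_lt_card ⟨fun d hd => ?_, fun hsub => ?_⟩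
    · rw [mem_filter] at hd ⊢
      exact ⟨hd.1, hd.2.trans hcb.le⟩
    · have := (mem_filter.1 (hsub (mem_filter.2 ⟨hb, le_rfl⟩))).2
      exact this.not_gt hcb
  · exact card_le_card fun d hd => by
      rw [mem_filter] at hd ⊢
      exact ⟨hd.1, hd.2.trans h⟩

theorem injOn_blockIndex : Set.InjOn P.blockIndex (P.parts : Set (Finset α)) :=
  fun _ hb _ hc h => P.injOn_min_parts hb hc <|
    ((blockIndex_le_blockIndex_iff hb).1 h.le).antisymm ((blockIndex_le_blockIndex_iff hc).1 h.ge)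

theorem blockIndex_mem_Icc {b : Finset α} (hb : b ∈ P.parts) :
    P.blockIndex b ∈ Icc 1 #P.parts :=
  mem_Icc.2 ⟨card_pos.2 ⟨b, mem_filter.2 ⟨hb, le_rfl⟩⟩, card_filter_le _ _⟩

theorem image_blockIndex : P.parts.image P.blockIndex = Icc 1 #P.parts :=
  eq_of_subset_of_card_le (image_subset_iff.2 fun _ => blockIndex_mem_Icc) <| by
    rw [card_image_of_injOn injOn_blockIndex, Nat.card_Icc, Nat.add_sub_cancel]

section CanonicalWord

variable {m : ℕ} (P : Finpartition (univ : Finset (Fin m)))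

def toWord (i : Fin m) : ℕ := P.blockIndex (P.part i)

variable {P}

theorem toWord_eq_of_mem {b : Finset (Fin m)} {i : Fin m} (hb : b ∈ P.parts) (hi : i ∈ b) :
    P.toWord i = P.blockIndex b := by
  rw [toWord, P.part_eq_of_mem hb hi]

theorem toWord_mem_Icc (i : Fin m) : P.toWord i ∈ Icc 1 #P.parts :=
  blockIndex_mem_Icc (P.part_mem.2 (mem_univ i))

theorem toWord_eq_toWord_iff {i j : Fin m} : P.toWord i = P.toWord j ↔ P.part i = P.part j :=
  injOn_blockIndex.eq_iff (P.part_mem.2 (mem_univ i)) (P.part_mem.2 (mem_univ j))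

theorem isRestrictedGrowth_toWord : IsRestrictedGrowth P.toWord := by
  intro i
  have hi := P.part_mem.2 (mem_univ i)
  obtain ⟨hpos, hle⟩ := mem_Icc.1 (toWord_mem_Icc (P := P) i)
  refine ⟨hpos, fun v hv hvi => ?_⟩
  have hvIcc : v ∈ Icc 1 #P.parts := mem_Icc.2 ⟨hv, hvi.le.trans hle⟩
  rw [← image_blockIndex, mem_image] at hvIcc
  obtain ⟨b, hb, rfl⟩ := hvIcc
  obtain ⟨j, hj⟩ := Finset.min_of_nonempty (P.nonempty_of_mem_parts hb)
  refine ⟨j, ?_, toWord_eq_of_mem hb (mem_of_min hj)⟩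
  have hmin : b.min < (P.part i).min :=
    lt_of_not_ge fun h => hvi.not_ge ((blockIndex_le_blockIndex_iff hi).2 h)
  rw [hj] at hmin
  exact WithTop.coe_lt_coe.1 (hmin.trans_le (Finset.min_le (P.mem_part (mem_univ i))))

theorem sup_toWord : univ.sup P.toWord = #P.parts := by
  refine le_antisymm (Finset.sup_le fun i _ => (mem_Icc.1 (toWord_mem_Icc i)).2) ?_
  rcases Nat.eq_zero_or_pos #P.parts with h | h
  · exact h ▸ Nat.zero_le _
  · have hk : #P.parts ∈ Icc 1 #P.parts := mem_Icc.2 ⟨h, le_rfl⟩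
    rw [← image_blockIndex, mem_image] at hk
    obtain ⟨b, hb, hbk⟩ := hk
    obtain ⟨j, hj⟩ := P.nonempty_of_mem_parts hb
    exact hbk ▸ toWord_eq_of_mem hb hj ▸ le_sup (mem_univ j)

theorem toWord_mem_setPartitionWords {k : ℕ} (hP : #P.parts = k) :
    P.toWord ∈ SetPartitionWords m k :=
  mem_setPartitionWords_iff.2 ⟨isRestrictedGrowth_toWord, sup_toWord.trans hP⟩

end CanonicalWord

end Finpartition

open Finpartition in
theorem ncard_setPartitionWords (m k : ℕ) : (SetPartitionWords m k).ncard = stirlingS2 m k := by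
  rw [stirlingS2, ← Nat.card_coe_set_eq]
  refine (Nat.card_congr (Equiv.ofBijective
    (fun P => ⟨P.1.toWord, toWord_mem_setPartitionWords P.2⟩) ⟨?_, ?_⟩)).symm
  · rintro ⟨P, _⟩ ⟨Q, _⟩ h
    have hPQ : P.toWord = Q.toWord := congrArg Subtype.val h
    exact Subtype.ext <| eq_of_forall_part_eq_part_iff fun i _ j _ => by
      rw [← toWord_eq_toWord_iff, ← toWord_eq_toWord_iff, hPQ]
  · rintro ⟨π, hπ⟩
    obtain ⟨hrg, hsup⟩ := mem_setPartitionWords_iff.1 hπ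
    have : DecidableRel (Setoid.ker π) := fun i j => decEq (π i) (π j)
    have hQ : (ofSetoid (Setoid.ker π)).toWord = π :=
      isRestrictedGrowth_toWord.eq_of_forall_eq_iff hrg fun i j => by
        rw [toWord_eq_toWord_iff, part_ofSetoid_eq_part_ofSetoid_iff, Setoid.ker_def]
    exact ⟨⟨_, by rw [← sup_toWord, hQ, hsup]⟩, Subtype.ext hQ⟩

theorem Fin.removeNth_apply_mk_of_lt {m : ℕ} {α : Type*} (f : Fin (m + 1) → α) {i j : ℕ}
    (hi : i < m) (hj : j < m + 1) (hij : i < j) :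
    Fin.removeNth ⟨j, hj⟩ f ⟨i, hi⟩ = f ⟨i, by omega⟩ :=
  congrArg f (Fin.succAbove_of_castSucc_lt _ _ hij)

theorem Fin.insertNth_apply_mk_of_lt {m : ℕ} {α : Type*} (x : α) (σ : Fin m → α) {i j : ℕ}
    (hi : i < m) (hj : j < m + 1) (hij : i < j) :
    (Fin.insertNth ⟨j, hj⟩ x σ : Fin (m + 1) → α) ⟨i, by omega⟩ = σ ⟨i, hi⟩ := by
  have := Fin.insertNth_apply_succAbove (α := fun _ => α) ⟨j, hj⟩ x σ ⟨i, hi⟩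
  rwa [Fin.succAbove_of_castSucc_lt _ _ hij] at this

theorem Fin.removeNth_lt_removeNth_of_forall_lt {m : ℕ} {α : Type*} [Preorder α]
    {f : Fin (m + 1) → α} {i j : ℕ} (hi : i < m) (hj : j < m + 1) (hij : i < j)
    (hrec : ∀ t : Fin (m + 1), (t : ℕ) < i → f t < f ⟨i, by omega⟩) :
    ∀ t < (⟨i, hi⟩ : Fin m), Fin.removeNth ⟨j, hj⟩ f t < Fin.removeNth ⟨j, hj⟩ f ⟨i, hi⟩ := by
  rintro ⟨t, ht⟩ (hti : t < i)
  rw [removeNth_apply_mk_of_lt f ht hj (hti.trans hij), removeNth_apply_mk_of_lt f hi hj hij]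
  exact hrec _ hti

theorem eq_of_forall_lt_of_apply_eq {ι α : Type*} [LinearOrder ι] [Preorder α] {f : ι → α}
    {a b : ι} (ha : ∀ j < a, f j < f a) (hb : ∀ j < b, f j < f b) (hab : f a = f b) : a = b := by
  by_contra hne
  rcases lt_or_gt_of_ne hne with h | h
  · exact (hb a h).ne hab
  · exact (ha b h).ne hab.symm

theorem Fin.exists_succAbove_le_apply_eq {m : ℕ} {α : Type*} {f : Fin (m + 1) → α}
    {q r : Fin (m + 1)} (hrq : r < q) (hfr : f r = f q) (i : Fin (m + 1)) :
    ∃ j, q.succAbove j ≤ i ∧ f (q.succAbove j) = f i := by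
  by_cases hi : i = q
  · obtain ⟨j, hj⟩ := Fin.exists_succAbove_eq hrq.ne
    exact ⟨j, hj ▸ hi ▸ hrq.le, by rw [hj, hi, hfr]⟩
  · obtain ⟨j, hj⟩ := Fin.exists_succAbove_eq hi
    exact ⟨j, hj.le, by rw [hj]⟩

section RemoveRepeatedLetter

variable {m : ℕ} {f : Fin (m + 1) → ℕ} {q r : Fin (m + 1)}

theorem isRestrictedGrowth_removeNth_iff (hrq : r < q) (hfr : f r = f q) :
    IsRestrictedGrowth (q.removeNth f) ↔ IsRestrictedGrowth f := by
  constructor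
  · intro h i
    obtain ⟨j, hji, hj⟩ := Fin.exists_succAbove_le_apply_eq hrq hfr i
    refine ⟨hj ▸ (h j).1, fun v hv hvi => ?_⟩
    obtain ⟨j', hj'j, hj'⟩ := (h j).2 v hv (show v < f (q.succAbove j) from hj ▸ hvi)
    exact ⟨_, (Fin.strictMono_succAbove q hj'j).trans_le hji, hj'⟩
  · intro h j
    refine ⟨(h _).1, fun v hv hvj => ?_⟩
    obtain ⟨i, hij, hi⟩ := (h _).2 v hv hvj
    obtain ⟨j', hj'i, hj'⟩ := Fin.exists_succAbove_le_apply_eq hrq hfr i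
    exact ⟨j', Fin.succAbove_lt_succAbove_iff.1 (hj'i.trans_lt hij), hj'.trans hi⟩

theorem sup_removeNth (hrq : r < q) (hfr : f r = f q) :
    univ.sup (q.removeNth f) = univ.sup f := by
  refine le_antisymm (Finset.sup_le fun j _ => le_sup (f := f) (mem_univ _))
    (Finset.sup_le fun i _ => ?_)
  obtain ⟨j, -, hj⟩ := Fin.exists_succAbove_le_apply_eq hrq hfr i
  exact hj ▸ le_sup (f := q.removeNth f) (mem_univ j)

theorem removeNth_mem_setPartitionWords_iff {k : ℕ} (hrq : r < q) (hfr : f r = f q) :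
    q.removeNth f ∈ SetPartitionWords m k ↔ f ∈ SetPartitionWords (m + 1) k := by
  rw [mem_setPartitionWords_iff, mem_setPartitionWords_iff,
    isRestrictedGrowth_removeNth_iff hrq hfr, sup_removeNth hrq hfr]

end RemoveRepeatedLetter

/-- The condition of the theorem on `(π, ℓ)`, copied verbatim so that the counted set is
`{p | p.1 ∈ SetPartitionWords n k ∧ IsRecordSymPeak p.1 p.2}` by definition. -/
def IsRecordSymPeak {n : ℕ} (π : Fin n → ℕ) (ℓ : Fin n) : Prop :=
  ∃ h : (ℓ : ℕ) + 2 < n,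
    π ℓ < π ⟨(ℓ : ℕ) + 1, by omega⟩ ∧
    π ⟨(ℓ : ℕ) + 2, h⟩ < π ⟨(ℓ : ℕ) + 1, by omega⟩ ∧
    π ℓ = π ⟨(ℓ : ℕ) + 2, h⟩ ∧
    (∀ j : Fin n, (j : ℕ) < (ℓ : ℕ) + 1 → π j < π ⟨(ℓ : ℕ) + 1, by omega⟩)

namespace IsRecordSymPeak

variable {m k : ℕ} {π π' : Fin (m + 1) → ℕ} {ℓ ℓ' : Fin (m + 1)}

theorem eq_of_removeNth_eq (hp : IsRecordSymPeak π ℓ) (hp' : IsRecordSymPeak π' ℓ')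
    (hσ : Fin.removeNth ⟨ℓ + 2, hp.fst⟩ π = Fin.removeNth ⟨ℓ' + 2, hp'.fst⟩ π')
    (hv : π ⟨ℓ + 1, by have := hp.fst; omega⟩ = π' ⟨ℓ' + 1, by have := hp'.fst; omega⟩) :
    (π, ℓ) = (π', ℓ') := by
  obtain ⟨h, -, -, heq, hrec⟩ := id hp
  obtain ⟨h', -, -, heq', hrec'⟩ := id hp'
  -- the peak top stays a record after the deletion, so it is the first occurrence of its
  -- value in the shortened word; this determines `ℓ`
  have ha := Fin.removeNth_lt_removeNth_of_forall_lt (by omega) h (by omega) hrec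
  have ha' := Fin.removeNth_lt_removeNth_of_forall_lt (by omega) h' (by omega) hrec'
  have htop : Fin.removeNth ⟨ℓ + 2, h⟩ π ⟨ℓ + 1, by omega⟩ =
      Fin.removeNth ⟨ℓ + 2, h⟩ π ⟨ℓ' + 1, by omega⟩ := calc
    _ = π ⟨ℓ + 1, by omega⟩ := Fin.removeNth_apply_mk_of_lt _ _ h (by omega)
    _ = π' ⟨ℓ' + 1, by omega⟩ := hv
    _ = _ := by rw [hσ]; exact (Fin.removeNth_apply_mk_of_lt _ _ h' (by omega)).symm
  rw [← hσ] at ha'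
  obtain rfl : ℓ = ℓ' := Fin.ext (by simpa using eq_of_forall_lt_of_apply_eq ha ha' htop)
  have hlast : π ⟨ℓ + 2, h⟩ = π' ⟨ℓ + 2, h⟩ := calc
    _ = Fin.removeNth ⟨ℓ + 2, h⟩ π ⟨ℓ, by omega⟩ :=
      heq.symm.trans (Fin.removeNth_apply_mk_of_lt _ _ h (by omega)).symm
    _ = Fin.removeNth ⟨ℓ + 2, h⟩ π' ⟨ℓ, by omega⟩ := by rw [hσ]
    _ = _ := (Fin.removeNth_apply_mk_of_lt _ _ h (by omega)).trans heq'
  rw [← Fin.insertNth_self_removeNth ⟨ℓ + 2, h⟩ π, ← Fin.insertNth_self_removeNth ⟨ℓ + 2, h⟩ π',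
    hσ, hlast]

theorem exists_removeNth_eq {σ : Fin m → ℕ} (hσ : σ ∈ SetPartitionWords m k)
    {v : ℕ} (hv : v ∈ Set.Icc 2 k) :
    ∃ π ℓ, π ∈ SetPartitionWords (m + 1) k ∧ ∃ hp : IsRecordSymPeak π ℓ,
      Fin.removeNth ⟨ℓ + 2, hp.fst⟩ π = σ ∧ π ⟨ℓ + 1, by have := hp.fst; omega⟩ = v := by
  obtain ⟨hv2, hvk⟩ := hv
  obtain ⟨hrg, hsup⟩ := mem_setPartitionWords_iff.1 hσ
  -- the first occurrence `ℓ + 1` of `v` in `σ` is a record; doubling `σ ℓ` right after it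
  -- creates the peak
  obtain ⟨i, hi⟩ := hrg.exists_eq (by omega) (hsup ▸ hvk)
  obtain ⟨⟨P, hP⟩, hpv : σ _ = v, hpmin⟩ := wellFounded_lt.has_min {i | σ i = v} ⟨i, hi⟩
  have hrec : ∀ j < (⟨P, hP⟩ : Fin m), σ j < v :=
    hpv ▸ hrg.lt_of_forall_ne fun j hj hjv => hpmin j (hjv.trans hpv) hj
  obtain ⟨j, hj, -⟩ := (hrg ⟨P, hP⟩).2 1 one_pos (by omega)
  obtain ⟨ℓ, rfl⟩ : ∃ ℓ, P = ℓ + 1 := ⟨P - 1, by have : (j : ℕ) < P := hj; omega⟩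
  set π : Fin (m + 1) → ℕ := Fin.insertNth ⟨ℓ + 2, by omega⟩ (σ ⟨ℓ, by omega⟩) σ
  have hbelow : ∀ t (ht : t < ℓ + 2), π ⟨t, by omega⟩ = σ ⟨t, by omega⟩ :=
    fun t ht => Fin.insertNth_apply_mk_of_lt _ _ _ _ ht
  have hlast : π ⟨ℓ + 2, by omega⟩ = σ ⟨ℓ, by omega⟩ := Fin.insertNth_apply_same _ _ _
  have hlt : σ ⟨ℓ, by omega⟩ < v := hrec _ (Fin.mk_lt_mk.2 (by omega))
  have hπ : π ∈ SetPartitionWords (m + 1) k := by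
    refine (removeNth_mem_setPartitionWords_iff (r := ⟨ℓ, by omega⟩) (q := ⟨ℓ + 2, by omega⟩)
      (Fin.mk_lt_mk.2 (by omega)) ((hbelow ℓ (by omega)).trans hlast.symm)).1 ?_
    rwa [Fin.removeNth_insertNth]
  have htop : π ⟨ℓ + 1, by omega⟩ = v := (hbelow (ℓ + 1) (by omega)).trans hpv
  refine ⟨π, ⟨ℓ, by omega⟩, hπ, ⟨by simp; omega, ?_, ?_, ?_, ?_⟩,
    Fin.removeNth_insertNth _ _ _, htop⟩
  · exact ((hbelow ℓ (by omega)).trans_lt hlt).trans_eq htop.symm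
  · exact (hlast.trans_lt hlt).trans_eq htop.symm
  · exact (hbelow ℓ (by omega)).trans hlast.symm
  · rintro ⟨t, ht⟩ htℓ
    exact ((hbelow t (by simp at htℓ; omega)).trans_lt (hrec _ htℓ)).trans_eq htop.symm

end IsRecordSymPeak

theorem ncard_setOf_isRecordSymPeak (m k : ℕ) :
    {p : (Fin (m + 1) → ℕ) × Fin (m + 1) |
        p.1 ∈ SetPartitionWords (m + 1) k ∧ IsRecordSymPeak p.1 p.2}.ncard =
      (SetPartitionWords m k ×ˢ Set.Icc 2 k).ncard := by
  refine Set.ncard_congr (fun p hp => (Fin.removeNth ⟨p.2 + 2, hp.2.fst⟩ p.1,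
    p.1 ⟨p.2 + 1, by have := hp.2.fst; omega⟩)) ?_ ?_ ?_
  · rintro ⟨π, ℓ⟩ ⟨hπ, hp⟩
    dsimp only at hπ hp ⊢
    obtain ⟨h, hlt, -, heq, -⟩ := hp
    obtain ⟨hrg, hsup⟩ := mem_setPartitionWords_iff.1 hπ
    refine ⟨(removeNth_mem_setPartitionWords_iff (by simp [Fin.lt_def]) heq).2 hπ, ?_,
      (le_sup (f := π) (mem_univ _)).trans_eq hsup⟩
    have := (hrg ℓ).1
    exact (show 2 ≤ π ⟨ℓ + 1, by omega⟩ by omega)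
  · rintro ⟨π, ℓ⟩ ⟨π', ℓ'⟩ ⟨_, hp⟩ ⟨_, hp'⟩ h
    exact hp.eq_of_removeNth_eq hp' (congrArg Prod.fst h) (congrArg Prod.snd h)
  · rintro ⟨σ, v⟩ ⟨hσ, hv⟩
    obtain ⟨π, ℓ, hπ, hp, hσ', hv'⟩ := IsRecordSymPeak.exists_removeNth_eq hσ hv
    exact ⟨(π, ℓ), ⟨hπ, hp⟩, Prod.ext hσ' hv'⟩

/-- The number of pairs `(π, ℓ)` with `π ∈ P_{n,k}` and `ℓ` a symmetric-peak
position of `π` whose middle entry `π (ℓ+1)` is a record equals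
`(k−1)·S(n−1,k)`. -/
theorem sympeak_record_count (n k : ℕ) (hk : 1 ≤ k) (hkn : k ≤ n) :
    Set.ncard {p : (Fin n → ℕ) × Fin n |
        p.1 ∈ SetPartitionWords n k ∧
        ∃ h : (p.2 : ℕ) + 2 < n,
          p.1 p.2 < p.1 ⟨(p.2 : ℕ) + 1, by omega⟩ ∧
          p.1 ⟨(p.2 : ℕ) + 2, h⟩ < p.1 ⟨(p.2 : ℕ) + 1, by omega⟩ ∧
          p.1 p.2 = p.1 ⟨(p.2 : ℕ) + 2, h⟩ ∧
          (∀ j : Fin n, (j : ℕ) < (p.2 : ℕ) + 1 →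
            p.1 j < p.1 ⟨(p.2 : ℕ) + 1, by omega⟩)} =
      (k - 1) * stirlingS2 (n - 1) k := by
  obtain ⟨m, rfl⟩ : ∃ m, n = m + 1 := ⟨n - 1, by omega⟩
  calc _ = (SetPartitionWords m k ×ˢ Set.Icc 2 k).ncard := ncard_setOf_isRecordSymPeak m k
    _ = _ := by
      rw [Set.ncard_prod, ncard_setPartitionWords, Set.ncard_Icc_nat, Nat.add_sub_cancel,
        mul_comm, show k + 1 - 2 = k - 1 by omega]
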